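/- Let Cov_Fib[ℓ] denote the length of the shortest cover of the length-ℓ prefix of the infinite Fibonacci word Fib. For every k ≥ 4, Cov_Fib[2F_k − 1] = 2F_k − 1; that is, the prefix of Fib of length 2F_k − 1 is superprimitive (has no proper cover). -/

import Mathlib

section Defs

variable {α : Type*}

/-- `C` occurs in `T` at starting position `i`. -/
def OccursAt (C T : List α) (i : ℕ) : Prop :=
  i + C.length ≤ T.length ∧ (T.drop i).take C.length = C

/-- `C` is a cover of `T`: `C` occurs in `T` and every position of `T`
lies within an occurrence of `C`. -/
def IsCover (C T : List α) : Prop :=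
  (∃ i, OccursAt C T i) ∧
    ∀ q, q < T.length → ∃ i, OccursAt C T i ∧ i ≤ q ∧ q < i + C.length

/-- A border of `T` is both a prefix and a suffix of `T`. -/
def IsBorder (B T : List α) : Prop := B <+: T ∧ B <:+ T

/-- `p` is a period of `U`: `U[i] = U[i+p]` for all `0 ≤ i < |U| - p`. -/
def IsPeriod (p : ℕ) (U : List α) : Prop :=
  0 < p ∧ ∀ i, i + p < U.length → U[i]? = U[i + p]?

/-- `U` is aperiodic: its smallest period `p` satisfies `2p > |U|`
(equivalently, every period `p` of `U` satisfies `2p > |U|`). -/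
def StrAperiodic (U : List α) : Prop := ∀ p, IsPeriod p U → U.length < 2 * p

/-- A nonempty string `X` is primitive if `X = Y^t` implies `t = 1`. -/
def StrPrimitive (X : List α) : Prop :=
  X ≠ [] ∧ ∀ (Y : List α) (t : ℕ), X = (List.replicate t Y).flatten → t = 1

/-- A string is superprimitive if it has no proper cover. -/
def Superprimitive (T : List α) : Prop :=
  ¬ ∃ C : List α, IsCover C T ∧ C.length < T.length

/-- The length of the shortest cover of `T`. -/
noncomputable def covLen (T : List α) : ℕ :=
  sInf {c | ∃ C : List α, C.length = c ∧ IsCover C T}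

/-- `{a, a+p, ..., a+(t-1)p}` is a maximal arithmetic progression with
difference `p` inside the set `S`. -/
def MaxProg (S : Set ℕ) (p a t : ℕ) : Prop :=
  0 < t ∧ (∀ r, r < t → a + r * p ∈ S) ∧ (∀ b, b + p = a → b ∉ S) ∧ a + t * p ∉ S

end Defs

/-- Fibonacci strings over `Bool` (`true` = a, `false` = b):
`Fib_0 = b`, `Fib_1 = a`, `Fib_m = Fib_{m-1} Fib_{m-2}`. -/
def fibWord : ℕ → List Bool
  | 0 => [false]
  | 1 => [true]
  | (m + 2) => fibWord (m + 1) ++ fibWord m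

/-- Fibonacci numbers `F_k = |Fib_k|`: `F_0 = F_1 = 1`, `F_2 = 2`, `F_3 = 3`, ... -/
def F (k : ℕ) : ℕ := (fibWord k).length

/-- The `n`-th letter of the infinite Fibonacci word (each `Fib_m`, `m ≥ 1`,
is a prefix of the infinite word, and `F_{n+2} > n`). -/
def fibInf (n : ℕ) : Bool := (fibWord (n + 2)).getD n false

/-- The length-`ℓ` prefix `Fib[0..ℓ)` of the infinite Fibonacci word. -/
def fibPrefix (ℓ : ℕ) : List Bool := (List.range ℓ).map fibInf

/-- `Cov_Fib[ℓ]`: the length of the shortest cover of `Fib[0..ℓ)`. -/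
noncomputable def covFib (ℓ : ℕ) : ℕ := covLen (fibPrefix ℓ)

/-!
A proper cover of `Fib[0..2F_k - 1)` would be a prefix `Fib[0..c)` that is also a suffix.
Two properties of the Fibonacci word rule it out. First, `Fib_m Fib_m` is a prefix of `Fib`
(`m ≥ 3`). Second, if `Fib[0..c)` reoccurs at a shift `p` with `F_a ≤ p < F_{a+1}`, then
`p + c + 2 ≤ F_{a+2}`: for `p = F_a` the letters at `F_{a+1} - 2` and `F_{a+2} - 2` differ, and
a general `p` reduces to `p - F_a` through the square `Fib_a Fib_a`.
The bound forces `c < F_k`; the square then moves the suffix occurrence into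
`Fib[0..F_k - 1)`, whose borders all have length `F_i - 1`; and the bound again shows that
`Fib[0..F_i - 1)` does not overlap itself, so position `c` is left uncovered.
-/

section Covers

variable {α : Type*}

lemma List.occursAt_map_range_iff (w : ℕ → α) {c L o : ℕ} :
    OccursAt ((List.range c).map w) ((List.range L).map w) o ↔
      o + c ≤ L ∧ ∀ x < c, w (o + x) = w x := by
  simp only [OccursAt, List.length_map, List.length_range]
  refine and_congr_right fun h => ?_
  simp only [List.ext_getElem_iff, List.length_take, List.length_drop, List.length_map,
    List.length_range, inf_eq_left, lt_inf_iff, List.getElem_take, List.getElem_drop,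
    List.getElem_map, List.getElem_range, and_imp]
  exact ⟨fun h' x hx => h'.2 x hx (by omega) hx, fun h' => ⟨by omega, fun x hx _ _ => h' x hx⟩⟩

lemma IsCover.eq_take {C T : List α} (h : IsCover C T) (hT : T ≠ []) : C = T.take C.length := by
  obtain ⟨i, ⟨-, hi⟩, hi0, -⟩ := h.2 0 (List.length_pos_iff.2 hT)
  rw [Nat.le_zero.1 hi0, List.drop_zero] at hi
  exact hi.symm

lemma isCover_self (T : List α) : IsCover T T :=
  ⟨⟨0, by simp [OccursAt]⟩, fun q hq => ⟨0, by simp [OccursAt], q.zero_le, by simpa using hq⟩⟩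

lemma Superprimitive.covLen_eq {T : List α} (h : Superprimitive T) : covLen T = T.length :=
  IsLeast.csInf_eq ⟨⟨T, rfl, isCover_self T⟩, fun _ ⟨C, hC, hcov⟩ =>
    not_lt.1 fun hlt => h ⟨C, hcov, hC ▸ hlt⟩⟩

end Covers

lemma F_add_two (n : ℕ) : F (n + 2) = F (n + 1) + F n := by
  simp [F, fibWord]

lemma F_eq_fib : ∀ n, F n = Nat.fib (n + 1)
  | 0 => rfl
  | 1 => rfl
  | n + 2 => by
    rw [F_add_two, F_eq_fib n, F_eq_fib (n + 1), add_comm, ← Nat.fib_add_two]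

lemma F_pos (n : ℕ) : 0 < F n := by
  simp [F_eq_fib]

lemma F_mono : Monotone F := fun _ _ h => by
  simpa only [F_eq_fib] using Nat.fib_mono (Nat.succ_le_succ h)

lemma lt_of_F_lt_F {a b : ℕ} (h : F a < F b) : a < b := F_mono.reflect_lt h

lemma lt_F_succ (n : ℕ) : n < F (n + 1) := by
  rw [F_eq_fib]
  have := Nat.le_fib_add_one (n + 1 + 1)
  omega

lemma exists_F_le_lt_F_succ {p : ℕ} (hp : 0 < p) : ∃ a, F a ≤ p ∧ p < F (a + 1) := by
  classical
  have hex : ∃ a, p < F (a + 1) := ⟨p, lt_F_succ p⟩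
  refine ⟨Nat.find hex, ?_, Nat.find_spec hex⟩
  rcases Nat.eq_zero_or_eq_succ_pred (Nat.find hex) with h | h
  · rw [h]; exact hp
  · rw [h]; exact not_lt.1 (Nat.find_min hex (by omega))

lemma pos_of_F_le_lt_F_succ {a p : ℕ} (h₁ : F a ≤ p) (h₂ : p < F (a + 1)) : 0 < a := by
  rcases Nat.eq_zero_or_pos a with rfl | h
  · exact absurd (h₁.trans_lt h₂) (lt_irrefl 1)
  · exact h

lemma two_le_F {n : ℕ} (hn : 2 ≤ n) : 2 ≤ F n := F_mono hn

lemma one_lt_of_two_le_F {n : ℕ} (h : 2 ≤ F n) : 1 < n := lt_of_F_lt_F (show F 1 < F n from h)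

lemma F_succ_le_two_mul (n : ℕ) : F (n + 1) ≤ 2 * F n := by
  cases n with
  | zero => decide
  | succ n =>
    show F (n + 2) ≤ 2 * F (n + 1)
    have : F (n + 2) = F (n + 1) + F n := F_add_two n
    have : F n ≤ F (n + 1) := F_mono (by omega)
    omega

lemma fibWord_prefix_of_le {a b : ℕ} (ha : 1 ≤ a) (h : a ≤ b) : fibWord a <+: fibWord b := by
  induction b, h using Nat.le_induction with
  | base => exact List.prefix_refl _
  | succ b hab ih =>
    obtain ⟨c, rfl⟩ : ∃ c, b = c + 1 := ⟨b - 1, by omega⟩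
    exact ih.trans (List.prefix_append _ _)

lemma List.IsPrefix.getD_eq {α : Type*} {l l' : List α} (h : l <+: l') {n : ℕ}
    (hn : n < l.length) (d : α) : l'.getD n d = l.getD n d := by
  obtain ⟨t, rfl⟩ := h
  exact List.getD_append _ _ _ _ hn

lemma fibInf_eq_getD {m n : ℕ} (hm : 1 ≤ m) (hn : n < F m) :
    fibInf n = (fibWord m).getD n false := by
  have hn' : n < F (n + 2) := (lt_F_succ n).trans_le (F_mono (by omega))
  rw [fibInf, ← (fibWord_prefix_of_le (by omega) (le_max_right m (n + 2))).getD_eq hn',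
    (fibWord_prefix_of_le hm (le_max_left m (n + 2))).getD_eq hn]

lemma fibInf_F_succ_add {m t : ℕ} (hm : 1 ≤ m) (ht : t < F m) :
    fibInf (F (m + 1) + t) = fibInf t := by
  have hlen : (fibWord (m + 1)).length = F (m + 1) := rfl
  rw [fibInf_eq_getD (m := m + 2) (by omega) (by rw [F_add_two]; omega), fibInf_eq_getD hm ht,
    fibWord, List.getD_append_right _ _ _ _ (by omega), hlen, Nat.add_sub_cancel_left]

/-- `Fib_m Fib_m` is a prefix of `Fib` for `m ≥ 3`. -/
lemma fibInf_F_add {m t : ℕ} (hm : 3 ≤ m) (ht : t < F m) : fibInf (F m + t) = fibInf t := by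
  obtain ⟨n, rfl⟩ : ∃ n, m = n + 2 := ⟨m - 2, by omega⟩
  have hF := F_add_two n
  rcases lt_or_ge t (F (n + 1)) with ht' | ht'
  · exact fibInf_F_succ_add (by omega) ht'
  · obtain ⟨s, rfl⟩ : ∃ s, t = F (n + 1) + s := ⟨t - F (n + 1), by omega⟩
    have hs : s < F n := by omega
    have hs' : s < F (n + 2) := hs.trans_le (F_mono (by omega))
    rw [← add_assoc, ← F_add_two (n + 1), fibInf_F_succ_add (by omega) hs',
      fibInf_F_succ_add (by omega) hs]

lemma fibInf_F_add_two_sub_two {m : ℕ} (hm : 2 ≤ m) :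
    fibInf (F (m + 2) - 2) = fibInf (F m - 2) := by
  have h2 := two_le_F hm
  have hF := F_add_two m
  have hF' : F m ≤ F (m + 1) := F_mono (by omega)
  rw [show F (m + 2) - 2 = F (m + 1) + (F m - 2) by omega, fibInf_F_add (by omega) (by omega)]

/-- The last two letters of `Fib_m` are `ab` and `ba` alternately. -/
lemma fibInf_F_sub_two_ne {m : ℕ} (hm : 2 ≤ m) : fibInf (F m - 2) ≠ fibInf (F (m + 1) - 2) := by
  induction m, hm using Nat.le_induction with
  | base => decide
  | succ m hm ih => rw [fibInf_F_add_two_sub_two hm]; exact Ne.symm ih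

def FibPrefixOccursAt (c o : ℕ) : Prop := ∀ x < c, fibInf (o + x) = fibInf x

lemma exists_fibInf_ne_add {a p : ℕ} (h₁ : F a ≤ p) (h₂ : p < F (a + 1)) :
    ∃ x, x + p + 2 ≤ F (a + 2) ∧ fibInf x ≠ fibInf (x + p) := by
  induction p using Nat.strong_induction_on generalizing a with
  | _ p ih =>
  obtain ⟨b, rfl⟩ : ∃ b, a = b + 1 := ⟨a - 1, by have := pos_of_F_le_lt_F_succ h₁ h₂; omega⟩
  replace h₂ : p < F (b + 2) := h₂
  show ∃ x, x + p + 2 ≤ F (b + 3) ∧ _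
  have hF := F_add_two b
  have hF' : F (b + 3) = F (b + 2) + F (b + 1) := F_add_two (b + 1)
  rcases h₁.eq_or_lt with rfl | hlt
  · have h2 := two_le_F (show 2 ≤ b + 2 by omega)
    refine ⟨F (b + 2) - 2, by omega, ?_⟩
    rw [show F (b + 2) - 2 + F (b + 1) = F (b + 3) - 2 by omega]
    exact fibInf_F_sub_two_ne (by omega)
  · obtain ⟨q, rfl⟩ : ∃ q, p = F (b + 1) + q := ⟨p - F (b + 1), by omega⟩
    obtain ⟨a', h₁', h₂'⟩ := exists_F_le_lt_F_succ (show 0 < q by omega)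
    have hb : 1 < b := one_lt_of_two_le_F (by omega)
    have ha' : a' < b := lt_of_F_lt_F (by omega)
    have hmono : F (a' + 2) ≤ F (b + 1) := F_mono (by omega)
    obtain ⟨x, hx, hne⟩ := ih q (by have := F_pos (b + 1); omega) h₁' h₂'
    exact ⟨x, by omega, by rwa [show x + (F (b + 1) + q) = F (b + 1) + (x + q) by omega,
      fibInf_F_add (by omega) (by omega)]⟩

lemma FibPrefixOccursAt.add_add_two_le_F {c p a : ℕ} (h : FibPrefixOccursAt c p)
    (h₁ : F a ≤ p) (h₂ : p < F (a + 1)) : p + c + 2 ≤ F (a + 2) := by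
  obtain ⟨x, hx, hne⟩ := exists_fibInf_ne_add h₁ h₂
  by_contra hlt
  exact hne (by rw [add_comm x p]; exact (h x (by omega)).symm)

lemma FibPrefixOccursAt.of_F_add {c m s : ℕ} (hm : 3 ≤ m) (hs : s + c ≤ F m)
    (h : FibPrefixOccursAt c (F m + s)) : FibPrefixOccursAt c s := fun x hx => by
  rw [← h x hx, add_assoc, fibInf_F_add hm (by omega)]

lemma FibPrefixOccursAt.exists_succ_eq_F {c s j : ℕ} (h : FibPrefixOccursAt c s)
    (hj : s + c + 1 = F j) : ∃ i, c + 1 = F i := by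
  induction j using Nat.strong_induction_on generalizing s with
  | _ j ih =>
  rcases Nat.eq_zero_or_pos s with rfl | hs
  · exact ⟨j, by omega⟩
  obtain ⟨a, h₁, h₂⟩ := exists_F_le_lt_F_succ hs
  have hbound := h.add_add_two_le_F h₁ h₂
  obtain ⟨n, rfl⟩ : ∃ n, j = n + 2 :=
    ⟨j - 2, by have := one_lt_of_two_le_F (show 2 ≤ F j by omega); omega⟩
  have hF := F_add_two n
  have ha : n + 1 ≤ a := by
    by_contra ha
    have := F_mono (show a + 2 ≤ n + 2 by omega)
    omega
  have hFa := F_mono ha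
  rcases (hFa.trans h₁).eq_or_lt with rfl | hlt
  · exact ⟨n, by omega⟩
  · obtain ⟨s', rfl⟩ : ∃ s', s = F (n + 1) + s' := ⟨s - F (n + 1), by omega⟩
    have hn : 1 < n := one_lt_of_two_le_F (by omega)
    have hFn : F n ≤ F (n + 1) := F_mono (by omega)
    exact ih n (by omega) (h.of_F_add (by omega) (by omega)) (by omega)

lemma FibPrefixOccursAt.lt_of_succ_eq_F {c o i : ℕ} (h : FibPrefixOccursAt c o) (ho : 0 < o)
    (hc : c + 1 = F i) : c < o := by
  by_contra hle
  obtain ⟨e, h₁, h₂⟩ := exists_F_le_lt_F_succ ho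
  have hbound := h.add_add_two_le_F h₁ h₂
  have hei : e + 1 ≤ i := lt_of_F_lt_F (h₁.trans_lt (show o < F i by omega))
  have := F_mono hei
  have := F_add_two e
  omega

lemma FibPrefixOccursAt.lt_F {c o k : ℕ} (h : FibPrefixOccursAt c o) (ho : 0 < o)
    (hk : o + c + 1 = 2 * F k) : c < F k := by
  by_contra hc
  obtain ⟨e, h₁, h₂⟩ := exists_F_le_lt_F_succ ho
  have hbound := h.add_add_two_le_F h₁ h₂
  have hek : e < k := lt_of_F_lt_F (h₁.trans_lt (show o < F k by omega))
  have := F_mono (show e + 2 ≤ k + 1 by omega)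
  have := F_succ_le_two_mul k
  omega

lemma fibPrefix_length (L : ℕ) : (fibPrefix L).length = L := by simp [fibPrefix]

lemma fibPrefix_take {c L : ℕ} (h : c ≤ L) : (fibPrefix L).take c = fibPrefix c := by
  rw [fibPrefix, fibPrefix, ← List.map_take, List.take_range, min_eq_left h]

lemma occursAt_fibPrefix_iff {c L o : ℕ} :
    OccursAt (fibPrefix c) (fibPrefix L) o ↔ o + c ≤ L ∧ FibPrefixOccursAt c o :=
  List.occursAt_map_range_iff fibInf

lemma superprimitive_fibPrefix {k : ℕ} (hk : 3 ≤ k) :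
    Superprimitive (fibPrefix (2 * F k - 1)) := by
  set L := 2 * F k - 1
  have hL : L + 1 = 2 * F k := by have := F_pos k; omega
  rintro ⟨C, hC, hlen⟩
  have hC' := hC.eq_take (by rw [← List.length_pos_iff, fibPrefix_length]; omega)
  rw [fibPrefix_take (hlen.le.trans_eq (fibPrefix_length L))] at hC'
  obtain ⟨c, rfl⟩ : ∃ c, C = fibPrefix c := ⟨_, hC'⟩
  rw [fibPrefix_length, fibPrefix_length] at hlen
  have cover : ∀ q < L, ∃ o ≤ q, q < o + c ∧ o + c ≤ L ∧ FibPrefixOccursAt c o := by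
    intro q hq
    obtain ⟨o, ho, hoq, hqo⟩ := hC.2 q (by rwa [fibPrefix_length])
    rw [fibPrefix_length] at hqo
    exact ⟨o, hoq, hqo, occursAt_fibPrefix_iff.1 ho⟩
  obtain ⟨o₁, -, hq₁, hL₁, hocc₁⟩ := cover (L - 1) (by omega)
  have hcF : c < F k := hocc₁.lt_F (by omega) (by omega)
  obtain ⟨s, rfl⟩ : ∃ s, o₁ = F k + s := ⟨o₁ - F k, by omega⟩
  obtain ⟨i, hi⟩ := (hocc₁.of_F_add hk (by omega)).exists_succ_eq_F (j := k) (by omega)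
  obtain ⟨o₂, ho₂, hq₂, -, hocc₂⟩ := cover c hlen
  exact absurd (hocc₂.lt_of_succ_eq_F (by omega) hi) (by omega)

/-- For every `k ≥ 4`, `Cov_Fib[2F_k - 1] = 2F_k - 1`; that is, the prefix of
the infinite Fibonacci word of length `2F_k - 1` is superprimitive. -/
theorem stmt8 (k : ℕ) (hk : 4 ≤ k) :
    covFib (2 * F k - 1) = 2 * F k - 1 ∧ Superprimitive (fibPrefix (2 * F k - 1)) := by
  have h := superprimitive_fibPrefix (k := k) (by omega)
  exact ⟨by rw [covFib, h.covLen_eq, fibPrefix_length], h⟩
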